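/- Let X be a Banach function space in L⁰(Ω, Σ, ℙ). Then the Kreps–Yan theorem holds for (X, σ(X, X_n^∼)): for every σ(X, X_n^∼)-closed cone C ⊆ X with −X₊ ⊆ C and C ∩ X₊ = {0}, there exists a strictly positive φ ∈ X_n^∼ with φ ≤ 0 on C. -/

import Mathlib

open MeasureTheory Filter

universe u v

variable {Ω : Type u}

/-- Order convergence of a net in a lattice-ordered group. -/
def OrderConvNet {E : Type v} [Lattice E] [AddCommGroup E] {ι : Type*} [Preorder ι]
    (y : ι → E) (x : E) : Prop :=
  ∃ z : ι → E, Antitone z ∧ IsGLB (Set.range z) 0 ∧ ∀ᶠ a in atTop, |y a - x| ≤ z a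

/-- A functional is order continuous if it carries nets order-converging to `0` to nets
converging to `0` in `ℝ`. -/
def OrderContinuousFun {E : Type v} [Lattice E] [AddCommGroup E] (φ : E → ℝ) : Prop :=
  ∀ (ι : Type v) (_ : Preorder ι) (_ : IsDirected ι (· ≤ ·)) (_ : Nonempty ι)
    (y : ι → E), OrderConvNet y 0 → Tendsto (fun a => φ (y a)) atTop (nhds 0)

/-- The Banach lattice `E` is a Banach function space in `L⁰(μ)` via `T`, i.e. `T` is a
linear order embedding of `E` onto an ideal (solid subspace) of `L⁰`. -/
structure IsBFSvia {m0 : MeasurableSpace Ω} (μ : Measure Ω) (E : Type v)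
    [NormedAddCommGroup E] [Lattice E] [HasSolidNorm E] [IsOrderedAddMonoid E] [NormedSpace ℝ E] [CompleteSpace E]
    (T : E →ₗ[ℝ] (Ω →ₘ[μ] ℝ)) : Prop where
  ord : ∀ x y : E, x ≤ y ↔ T x ≤ T y
  solid : ∀ (h : Ω →ₘ[μ] ℝ) (x : E), |h| ≤ |T x| → ∃ e : E, T e = h

/-- The weak topology `σ(E, Eₙ~)` induced by the order continuous dual. -/
noncomputable def weakOCTop (E : Type v) [Lattice E] [AddCommGroup E] [Module ℝ E] :
    TopologicalSpace E :=
  ⨅ φ ∈ {φ : E →ₗ[ℝ] ℝ | OrderContinuousFun ⇑φ},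
    TopologicalSpace.induced ⇑φ inferInstance

open Topology

/-!
Separation in `σ(E, Eₙ~)` yields, for every `x > 0`, a positive order continuous functional
that is `≤ 0` on `C` and positive at `x`; these have to be glued into a single one. Say that a
positive functional `f` charges a measurable set `S` along `u ≥ 0` if `f (u · 𝟙_A) > 0` for every
non-null measurable `A ⊆ S`. Positive functionals on a Banach lattice are norm bounded, so if
`fₙ` charges `Sₙ` along `uₙ`, suitable weights make `∑ cₙ fₙ` an order continuous functional
charging `⋃ Sₙ` along `∑ dₙ uₙ`. In a finite measure space this gives such a `φ`, nonpositive
on `C`, charging an essentially largest set `S₀`. If `φ x = 0` for some `x > 0`, then `x ≤ 0`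
a.e. on `S₀`, whereas a functional separating `x` charges a non-null set on which `x > 0`: this
contradicts the maximality of `S₀`.
-/

def orderContinuousDual (E : Type v) [Lattice E] [AddCommGroup E] [Module ℝ E] :
    Submodule ℝ (E →ₗ[ℝ] ℝ) where
  carrier := {φ | OrderContinuousFun ⇑φ}
  add_mem' hf hg ι _ hd hn y hy := by simpa using (hf ι _ hd hn y hy).add (hg ι _ hd hn y hy)
  zero_mem' _ _ _ _ _ _ := by simp
  smul_mem' c _ hf ι _ hd hn y hy := by simpa using (hf ι _ hd hn y hy).const_mul c

theorem OrderContinuousFun.tendsto_of_antitone {E : Type v} [Lattice E] [AddCommGroup E]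
    [IsOrderedAddMonoid E]
    {f : E → ℝ} (hf : OrderContinuousFun f) {y : ℕ → E} (hy : Antitone y)
    (hglb : IsGLB (Set.range y) 0) : Tendsto (fun n => f (y n)) atTop (𝓝 0) := by
  let y' : ULift.{v} ℕ → E := fun n => y n.down
  have hy' : OrderConvNet y' 0 := by
    refine ⟨y', fun a b h => hy h, ?_, .of_forall fun n => ?_⟩
    · rwa [Set.range_comp' y ULift.down, ULift.down_surjective.range_eq, Set.image_univ]
    · rw [sub_zero, abs_of_nonneg (hglb.1 ⟨n.down, rfl⟩)]
  exact (hf _ inferInstance inferInstance inferInstance y' hy').comp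
    (tendsto_atTop_atTop_of_monotone (fun _ _ h => h) fun b => ⟨b.down, le_rfl⟩)

section NormedLattice

variable {E : Type v} [NormedAddCommGroup E] [Lattice E] [HasSolidNorm E]

theorem OrderConvNet.exists_eventually_norm_le {ι : Type*} [Preorder ι] [Nonempty ι]
    {y : ι → E} (hy : OrderConvNet y 0) : ∃ R, 0 ≤ R ∧ ∀ᶠ a in atTop, ‖y a‖ ≤ R := by
  obtain ⟨z, hz, -, hyz⟩ := hy
  obtain ⟨a₀⟩ := ‹Nonempty ι›
  refine ⟨‖z a₀‖, norm_nonneg _, ?_⟩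
  filter_upwards [hyz, eventually_ge_atTop a₀] with a ha ha₀
  rw [sub_zero] at ha
  exact norm_le_norm_of_abs_le_abs ((ha.trans (hz ha₀)).trans (le_abs_self _))

variable [NormedSpace ℝ E]

theorem OrderContinuousFun.of_tendsto {g : ℕ → E →L[ℝ] ℝ} {φ : E →L[ℝ] ℝ}
    (hg : ∀ n, OrderContinuousFun ⇑(g n)) (hφ : Tendsto g atTop (𝓝 φ)) :
    OrderContinuousFun ⇑φ := by
  intro ι _ _ _ y hy
  obtain ⟨R, hR, hyR⟩ := hy.exists_eventually_norm_le
  rw [Metric.tendsto_nhds]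
  intro ε hε
  obtain ⟨n, hn⟩ : ∃ n, ‖φ - g n‖ * R < ε / 2 := by
    have : Tendsto (fun n => ‖φ - g n‖ * R) atTop (𝓝 0) := by
      simpa using ((tendsto_iff_norm_sub_tendsto_zero.mp hφ).mul_const R).congr
        fun n => by rw [norm_sub_rev]
    exact (this.eventually (gt_mem_nhds (half_pos hε))).exists
  filter_upwards [hyR, Metric.tendsto_nhds.mp (hg n ι ‹_› ‹_› ‹_› y hy) (ε / 2) (half_pos hε)]
    with a ha hgn
  rw [Real.dist_eq, sub_zero] at hgn ⊢
  calc |φ (y a)| ≤ |(φ - g n) (y a)| + |g n (y a)| := by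
        simpa using abs_add_le ((φ - g n) (y a)) (g n (y a))
    _ ≤ ‖φ - g n‖ * R + |g n (y a)| := by
        gcongr
        exact ((φ - g n).le_opNorm _).trans (by gcongr)
    _ < ε := by linarith

end NormedLattice

theorem exists_pos_summable_smul {F : Type*} [NormedAddCommGroup F] [NormedSpace ℝ F]
    [CompleteSpace F] (x : ℕ → F) :
    ∃ c : ℕ → ℝ, (∀ n, 0 < c n) ∧ Summable fun n => c n • x n := by
  refine ⟨fun n => (1 / 2) ^ n / (1 + ‖x n‖), fun n => by positivity, ?_⟩
  refine .of_norm_bounded summable_geometric_two fun n => ?_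
  rw [norm_smul, Real.norm_of_nonneg (by positivity), div_mul_eq_mul_div, mul_div_assoc]
  exact mul_le_of_le_one_right (by positivity) (div_le_one_of_le₀ (by linarith) (by positivity))

section PositiveFunctionals

variable {E : Type v} [NormedAddCommGroup E] [Lattice E] [HasSolidNorm E] [IsOrderedAddMonoid E]
  [NormedSpace ℝ E] [CompleteSpace E] [PosSMulMono ℝ E]

theorem LinearMap.exists_apply_le_of_monotone {f : E →ₗ[ℝ] ℝ} (hf : Monotone f) :
    ∃ M, ∀ x, 0 ≤ x → ‖x‖ ≤ 1 → f x ≤ M := by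
  -- otherwise pick `xₙ` with `f xₙ > 4ⁿ`; then `f (∑ 2⁻ᵏ xₖ) ≥ 2⁻ⁿ f xₙ > 2ⁿ` for every `n`
  by_contra! h
  choose x hx0 hx1 hfx using fun n : ℕ => h (4 ^ n)
  have hsum : Summable fun n => (1 / 2 : ℝ) ^ n • x n :=
    .of_norm_bounded summable_geometric_two fun n => by
      rw [norm_smul, Real.norm_of_nonneg (by positivity)]
      exact mul_le_of_le_one_right (by positivity) (hx1 n)
  have hterm : ∀ n, (1 / 2 : ℝ) ^ n • x n ≤ ∑' k, (1 / 2 : ℝ) ^ k • x k := fun n =>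
    hsum.le_tsum n fun k _ => smul_nonneg (by positivity) (hx0 k)
  obtain ⟨n, hn⟩ := pow_unbounded_of_one_lt (f (∑' k, (1 / 2 : ℝ) ^ k • x k)) one_lt_two
  have : (2 : ℝ) ^ n < f ((1 / 2 : ℝ) ^ n • x n) := calc
    (2 : ℝ) ^ n = (1 / 2) ^ n * 4 ^ n := by
      rw [← mul_pow]; norm_num
    _ < (1 / 2) ^ n * f (x n) := by gcongr; exact hfx n
    _ = f ((1 / 2 : ℝ) ^ n • x n) := by rw [map_smul, smul_eq_mul]
  linarith [hf (hterm n)]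

theorem LinearMap.exists_bound_of_monotone {f : E →ₗ[ℝ] ℝ} (hf : Monotone f) :
    ∃ M, ∀ x, ‖f x‖ ≤ M * ‖x‖ := by
  obtain ⟨M, hM⟩ := exists_apply_le_of_monotone hf
  refine ⟨M, fun x => ?_⟩
  rcases eq_or_ne x 0 with rfl | hx
  · simp
  have hnx : 0 < ‖x‖ := norm_pos_iff.mpr hx
  have habs : ‖f x‖ ≤ f |x| := by
    rw [Real.norm_eq_abs]
    exact abs_le.mpr ⟨by simpa using hf (neg_le.mp (neg_le_abs x)), hf (le_abs_self x)⟩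
  have hunit := hM (‖x‖⁻¹ • |x|) (smul_nonneg (by positivity) (abs_nonneg x))
    (by rw [norm_smul, norm_abs_eq_norm, Real.norm_of_nonneg (by positivity),
      inv_mul_cancel₀ hnx.ne'])
  rw [map_smul, smul_eq_mul, inv_mul_le_iff₀ hnx] at hunit
  linarith

theorem exists_hasSum_orderContinuous (f : ℕ → E →ₗ[ℝ] ℝ)
    (hoc : ∀ n, OrderContinuousFun ⇑(f n)) (hmono : ∀ n, Monotone (f n)) :
    ∃ c : ℕ → ℝ, (∀ n, 0 < c n) ∧ ∃ φ : E →ₗ[ℝ] ℝ, OrderContinuousFun ⇑φ ∧ Monotone φ ∧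
      ∀ x, HasSum (fun n => c n * f n x) (φ x) := by
  let F : ℕ → E →L[ℝ] ℝ := fun n =>
    (f n).mkContinuousOfExistsBound (LinearMap.exists_bound_of_monotone (hmono n))
  obtain ⟨c, hc, hsum⟩ := exists_pos_summable_smul F
  have hφ : ∀ x, HasSum (fun n => c n * f n x) ((∑' n, c n • F n) x) := fun x => by
    simpa [F] using (ContinuousLinearMap.apply ℝ ℝ x).hasSum hsum.hasSum
  refine ⟨c, hc, ((∑' n, c n • F n : E →L[ℝ] ℝ) : E →ₗ[ℝ] ℝ), ?_, ?_, hφ⟩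
  · refine OrderContinuousFun.of_tendsto (fun N => ?_) hsum.hasSum.tendsto_sum_nat
    change ((∑ n ∈ Finset.range N, c n • F n : E →L[ℝ] ℝ) : E →ₗ[ℝ] ℝ) ∈ orderContinuousDual E
    rw [ContinuousLinearMap.toLinearMap_sum]
    exact Submodule.sum_mem _ fun n _ => Submodule.smul_mem _ _ (hoc n)
  · refine (monotone_iff_map_nonneg _).2 fun x hx => (hφ x).nonneg fun n => ?_
    exact mul_nonneg (hc n).le (by simpa using hmono n hx)

end PositiveFunctionals

theorem weakOCTop_eq_weakBilin (E : Type v) [Lattice E] [AddCommGroup E] [Module ℝ E] :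
    weakOCTop E = WeakBilin.instTopologicalSpace (orderContinuousDual E).subtype.flip := by
  rw [weakOCTop, iInf_subtype']
  change _ = TopologicalSpace.induced (fun x (φ : orderContinuousDual E) => φ.1 x) _
  rw [Pi.topologicalSpace, induced_iInf]
  exact iInf_congr fun φ => by rw [induced_compose]; rfl

theorem WeakBilin.exists_separating_of_notMem_cone {E F : Type*} [AddCommGroup E] [Module ℝ E]
    [AddCommGroup F] [Module ℝ F] (B : E →ₗ[ℝ] F →ₗ[ℝ] ℝ) {C : Set E}
    (hC : IsClosed (X := WeakBilin B) C) (hconv : Convex ℝ C) (h0 : 0 ∈ C)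
    (hsmul : ∀ z ∈ C, ∀ r : ℝ, 0 ≤ r → r • z ∈ C) {x : E} (hx : x ∉ C) :
    ∃ y : F, (∀ z ∈ C, B z y ≤ 0) ∧ 0 < B x y := by
  obtain ⟨g, u, hgC, hgx⟩ := geometric_hahn_banach_closed_point (E := WeakBilin B) hconv hC hx
  obtain ⟨y, rfl⟩ := LinearMap.dualEmbedding_surjective B g
  replace hgC : ∀ z ∈ C, B z y < u := hgC
  have hu : 0 < u := by simpa using hgC 0 h0
  refine ⟨y, fun z hz => ?_, hu.trans hgx⟩
  by_contra! hpos
  have := hgC _ (hsmul z hz (u / B z y) (div_pos hu hpos).le)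
  rw [map_smul, LinearMap.smul_apply, smul_eq_mul, div_mul_cancel₀ _ hpos.ne'] at this
  exact lt_irrefl _ this

theorem exists_orderContinuous_separating_of_notMem_cone {E : Type v} [Lattice E]
    [AddCommGroup E] [Module ℝ E] {C : Set E} (hC : IsClosed[weakOCTop E] C)
    (hconv : Convex ℝ C) (h0 : 0 ∈ C) (hsmul : ∀ z ∈ C, ∀ r : ℝ, 0 ≤ r → r • z ∈ C)
    {x : E} (hx : x ∉ C) :
    ∃ f ∈ orderContinuousDual E, (∀ z ∈ C, f z ≤ 0) ∧ 0 < f x := by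
  have hC' : IsClosed (X := WeakBilin (orderContinuousDual E).subtype.flip) C := by
    rwa [weakOCTop_eq_weakBilin] at hC
  obtain ⟨⟨f, hf⟩, hfC, hfx⟩ :=
    WeakBilin.exists_separating_of_notMem_cone (F := orderContinuousDual E) _ hC' hconv h0 hsmul hx
  exact ⟨f, hf, hfC, hfx⟩

theorem exists_orderContinuous_monotone_separating {E : Type v} [Lattice E] [AddCommGroup E]
    [IsOrderedAddMonoid E] [Module ℝ E] {C : Set E} (hC : IsClosed[weakOCTop E] C)
    (hsmul : ∀ z ∈ C, ∀ r : ℝ, 0 ≤ r → r • z ∈ C) (hadd : ∀ z ∈ C, ∀ w ∈ C, z + w ∈ C)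
    (hneg : ∀ z : E, 0 ≤ z → -z ∈ C) (hint : ∀ z ∈ C, 0 ≤ z → z = 0) {x : E} (hx : 0 < x) :
    ∃ f : E →ₗ[ℝ] ℝ, OrderContinuousFun ⇑f ∧ Monotone f ∧ (∀ z ∈ C, f z ≤ 0) ∧ 0 < f x := by
  obtain ⟨f, hoc, hfC, hfx⟩ := exists_orderContinuous_separating_of_notMem_cone hC
    (fun a ha b hb s t hs ht _ => hadd _ (hsmul a ha s hs) _ (hsmul b hb t ht))
    (by simpa using hneg 0 le_rfl) hsmul fun hxC => hx.ne' (hint x hxC hx.le)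
  refine ⟨f, hoc, (monotone_iff_map_nonneg f).2 fun z hz => ?_, hfC, hfx⟩
  simpa using hfC _ (hneg z hz)

theorem MeasureTheory.exists_ae_maximal_of_iUnion_mem {Ω : Type*} [MeasurableSpace Ω]
    (μ : Measure Ω) [IsFiniteMeasure μ] {𝒮 : Set (Set Ω)} (hne : 𝒮.Nonempty)
    (hmeas : ∀ S ∈ 𝒮, MeasurableSet S) (hU : ∀ S : ℕ → Set Ω, (∀ n, S n ∈ 𝒮) → ⋃ n, S n ∈ 𝒮) :
    ∃ S₀ ∈ 𝒮, ∀ S ∈ 𝒮, S ≤ᵐ[μ] S₀ := by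
  obtain ⟨m, -, hm, hm𝒮⟩ := exists_seq_tendsto_sSup (hne.image μ) (OrderTop.bddAbove _)
  choose S hS hSm using hm𝒮
  have hS₀ : ⋃ n, S n ∈ 𝒮 := hU S hS
  have hmax : ∀ T ∈ 𝒮, μ T ≤ μ (⋃ n, S n) := fun T hT =>
    (le_sSup (Set.mem_image_of_mem μ hT)).trans <| le_of_tendsto' hm fun n =>
      hSm n ▸ measure_mono (Set.subset_iUnion S n)
  refine ⟨_, hS₀, fun T hT => ae_le_set.2 ?_⟩
  have hunion : T ∪ ⋃ n, S n ∈ 𝒮 := by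
    have := hU (fun n => Nat.casesOn n T S) fun n => Nat.casesOn n hT hS
    rwa [← Set.union_iUnion_nat_succ] at this
  have := hmax _ hunion
  rw [← Set.sdiff_union_self, measure_union Set.disjoint_sdiff_left (hmeas _ hS₀), add_comm,
    (ENNReal.cancel_of_ne (measure_ne_top μ _)).add_le_iff_nonpos_right] at this
  exact nonpos_iff_eq_zero.mp this

theorem MeasureTheory.AEEqFun.coeFn_linearMap_add {E : Type*} [AddCommGroup E] [Module ℝ E]
    {m0 : MeasurableSpace Ω} {μ : Measure Ω} (T : E →ₗ[ℝ] (Ω →ₘ[μ] ℝ)) (x y : E) :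
    ⇑(T (x + y)) =ᵐ[μ] ⇑(T x) + ⇑(T y) := by
  rw [map_add]; exact coeFn_add _ _

theorem MeasureTheory.AEEqFun.coeFn_linearMap_sub {E : Type*} [AddCommGroup E] [Module ℝ E]
    {m0 : MeasurableSpace Ω} {μ : Measure Ω} (T : E →ₗ[ℝ] (Ω →ₘ[μ] ℝ)) (x y : E) :
    ⇑(T (x - y)) =ᵐ[μ] ⇑(T x) - ⇑(T y) := by
  rw [map_sub]; exact coeFn_sub _ _

theorem MeasureTheory.AEEqFun.coeFn_linearMap_smul {E : Type*} [AddCommGroup E] [Module ℝ E]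
    {m0 : MeasurableSpace Ω} {μ : Measure Ω} (T : E →ₗ[ℝ] (Ω →ₘ[μ] ℝ)) (c : ℝ) (x : E) :
    ⇑(T (c • x)) =ᵐ[μ] c • ⇑(T x) := by
  rw [map_smul]; exact coeFn_smul _ _

namespace IsBFSvia

variable {m0 : MeasurableSpace Ω} {μ : Measure Ω} {E : Type v} [NormedAddCommGroup E] [Lattice E]
  [HasSolidNorm E] [IsOrderedAddMonoid E] [NormedSpace ℝ E] [CompleteSpace E]
  {T : E →ₗ[ℝ] (Ω →ₘ[μ] ℝ)} (hT : IsBFSvia μ E T)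
include hT

theorem le_iff_ae {x y : E} : x ≤ y ↔ ⇑(T x) ≤ᵐ[μ] ⇑(T y) := by
  rw [hT.ord, AEEqFun.coeFn_le]

theorem eq_iff_ae {x y : E} : x = y ↔ ⇑(T x) =ᵐ[μ] ⇑(T y) := by
  rw [← AEEqFun.ext_iff]
  exact ⟨congrArg T, fun h => le_antisymm ((hT.ord x y).2 h.le) ((hT.ord y x).2 h.ge)⟩

theorem posSMulMono : PosSMulMono ℝ E := by
  refine ⟨fun c hc x y hxy => hT.le_iff_ae.2 ?_⟩
  filter_upwards [hT.le_iff_ae.1 hxy, AEEqFun.coeFn_linearMap_smul T c x,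
    AEEqFun.coeFn_linearMap_smul T c y] with ω h hx hy
  rw [hx, hy]
  exact mul_le_mul_of_nonneg_left h hc

theorem exists_eq_indicator {A : Set Ω} (hA : MeasurableSet A) (u : E) :
    ∃ e : E, ⇑(T e) =ᵐ[μ] A.indicator ⇑(T u) := by
  set g : Ω →ₘ[μ] ℝ := AEEqFun.mk _ ((T u).aestronglyMeasurable.indicator hA)
  have hg : ⇑g =ᵐ[μ] A.indicator ⇑(T u) := AEEqFun.coeFn_mk _ _
  obtain ⟨e, he⟩ := hT.solid g u <| AEEqFun.coeFn_le.1 <| by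
    filter_upwards [AEEqFun.coeFn_abs g, AEEqFun.coeFn_abs (T u), hg] with ω h1 h2 h3
    rw [h1, h2, h3]
    by_cases hω : ω ∈ A <;> simp [hω]
  exact ⟨e, he ▸ hg⟩

/-- `u ↦ u · 𝟙_A`, which stays in `E` because `E` is an ideal of `L⁰`. -/
noncomputable def restrict {A : Set Ω} (hA : MeasurableSet A) : E →ₗ[ℝ] E where
  toFun u := (hT.exists_eq_indicator hA u).choose
  map_add' u v := hT.eq_iff_ae.2 <| by
    filter_upwards [(hT.exists_eq_indicator hA (u + v)).choose_spec,
      (hT.exists_eq_indicator hA u).choose_spec, (hT.exists_eq_indicator hA v).choose_spec,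
      AEEqFun.coeFn_linearMap_add T (hT.exists_eq_indicator hA u).choose
        (hT.exists_eq_indicator hA v).choose,
      AEEqFun.coeFn_linearMap_add T u v] with ω h h₁ h₂ h₁₂ huv
    rw [h, h₁₂, Pi.add_apply, h₁, h₂]
    by_cases hω : ω ∈ A
    · simp only [Set.indicator_of_mem hω, huv, Pi.add_apply]
    · simp only [Set.indicator_of_notMem hω, add_zero]
  map_smul' c u := hT.eq_iff_ae.2 <| by
    filter_upwards [(hT.exists_eq_indicator hA (c • u)).choose_spec,
      (hT.exists_eq_indicator hA u).choose_spec,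
      AEEqFun.coeFn_linearMap_smul T c (hT.exists_eq_indicator hA u).choose,
      AEEqFun.coeFn_linearMap_smul T c u] with ω h h₁ hc hcu
    rw [h, RingHom.id_apply, hc, Pi.smul_apply, h₁]
    by_cases hω : ω ∈ A
    · simp only [Set.indicator_of_mem hω, hcu, Pi.smul_apply]
    · simp only [Set.indicator_of_notMem hω, smul_zero]

theorem coeFn_restrict {A : Set Ω} (hA : MeasurableSet A) (u : E) :
    ⇑(T (hT.restrict hA u)) =ᵐ[μ] A.indicator ⇑(T u) :=
  (hT.exists_eq_indicator hA u).choose_spec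

theorem nonneg_iff_ae {x : E} : 0 ≤ x ↔ ∀ᵐ ω ∂μ, 0 ≤ T x ω := by
  have h0 : ⇑(T 0) =ᵐ[μ] 0 := by rw [map_zero]; exact AEEqFun.coeFn_zero
  rw [hT.le_iff_ae]
  exact ⟨fun h => by filter_upwards [h, h0] with ω h h0; rwa [h0] at h,
    fun h => by filter_upwards [h, h0] with ω h h0; rwa [h0]⟩

theorem restrict_nonneg {A : Set Ω} (hA : MeasurableSet A) {u : E} (hu : 0 ≤ u) :
    0 ≤ hT.restrict hA u := by
  rw [hT.nonneg_iff_ae] at hu ⊢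
  filter_upwards [hT.coeFn_restrict hA u, hu] with ω h hu
  rw [h]
  exact Set.indicator_nonneg (fun _ _ => hu) ω

theorem restrict_monotone {A : Set Ω} (hA : MeasurableSet A) : Monotone (hT.restrict hA) :=
  (monotone_iff_map_nonneg _).2 fun _ => hT.restrict_nonneg hA

theorem restrict_le_restrict {A B : Set Ω} (hA : MeasurableSet A) (hB : MeasurableSet B)
    (hAB : A ≤ᵐ[μ] B) {u : E} (hu : 0 ≤ u) : hT.restrict hA u ≤ hT.restrict hB u := by
  rw [hT.le_iff_ae]
  filter_upwards [hT.coeFn_restrict hA u, hT.coeFn_restrict hB u, hT.nonneg_iff_ae.1 hu, hAB]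
    with ω hA' hB' hu hAB
  rw [hA', hB']
  by_cases hω : ω ∈ A
  · rw [Set.indicator_of_mem hω, Set.indicator_of_mem (hAB hω)]
  · rw [Set.indicator_of_notMem hω]
    exact Set.indicator_nonneg (fun _ _ => hu) ω

theorem restrict_univ (u : E) : hT.restrict MeasurableSet.univ u = u := by
  rw [hT.eq_iff_ae]
  filter_upwards [hT.coeFn_restrict .univ u] with ω h
  rw [h, Set.indicator_univ]

theorem restrict_union_le {A B : Set Ω} (hA : MeasurableSet A) (hB : MeasurableSet B) {u : E}
    (hu : 0 ≤ u) : hT.restrict (hA.union hB) u ≤ hT.restrict hA u + hT.restrict hB u := by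
  rw [hT.le_iff_ae]
  filter_upwards [hT.coeFn_restrict (hA.union hB) u, hT.coeFn_restrict hA u,
    hT.coeFn_restrict hB u, AEEqFun.coeFn_linearMap_add T (hT.restrict hA u) (hT.restrict hB u),
    hT.nonneg_iff_ae.1 hu] with ω hAB hA' hB' hadd hu
  rw [hAB, hadd, Pi.add_apply, hA', hB']
  by_cases hωA : ω ∈ A <;> by_cases hωB : ω ∈ B <;> simp [hωA, hωB, hu]

theorem restrict_le_of_ae {A : Set Ω} (hA : MeasurableSet A) {u v : E} (hv : 0 ≤ v)
    (h : ∀ᵐ ω ∂μ, ω ∈ A → T u ω ≤ T v ω) : hT.restrict hA u ≤ v := by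
  rw [hT.le_iff_ae]
  filter_upwards [hT.coeFn_restrict hA u, hT.nonneg_iff_ae.1 hv, h] with ω hu hv h
  rw [hu]
  by_cases hω : ω ∈ A
  · rw [Set.indicator_of_mem hω]; exact h hω
  · rw [Set.indicator_of_notMem hω]; exact hv

theorem tendsto_restrict_iUnion {f : E →ₗ[ℝ] ℝ} (hf : OrderContinuousFun ⇑f) {A : ℕ → Set Ω}
    (hA : ∀ n, MeasurableSet (A n)) (hmono : Monotone A) {u : E} (hu : 0 ≤ u) :
    Tendsto (fun n => f (hT.restrict (hA n) u)) atTop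
      (𝓝 (f (hT.restrict (.iUnion hA) u))) := by
  set y : ℕ → E := fun n => hT.restrict (.iUnion hA) u - hT.restrict (hA n) u
  have hle : ∀ n, hT.restrict (hA n) u ≤ hT.restrict (.iUnion hA) u := fun n =>
    hT.restrict_le_restrict _ _ (Set.subset_iUnion A n).eventuallyLE hu
  have hanti : Antitone y := fun m n hmn =>
    sub_le_sub_left (hT.restrict_le_restrict _ _ (hmono hmn).eventuallyLE hu) _
  -- pointwise, `y n = 𝟙_{⋃ A \ A n} · u` vanishes for large `n`
  have hglb : IsGLB (Set.range y) 0 := by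
    refine ⟨Set.forall_mem_range.2 fun n => sub_nonneg.2 (hle n), fun w hw => ?_⟩
    have hy : ∀ n, ⇑(T (y n)) =ᵐ[μ]
        (⋃ n, A n).indicator ⇑(T u) - (A n).indicator ⇑(T u) := fun n => by
      filter_upwards [AEEqFun.coeFn_linearMap_sub T _ _,
        hT.coeFn_restrict (.iUnion hA) u, hT.coeFn_restrict (hA n) u] with ω h h₁ h₂
      rw [h, Pi.sub_apply, h₁, h₂, Pi.sub_apply]
    rw [hT.le_iff_ae, map_zero]
    filter_upwards [ae_all_iff.2 fun n => hT.le_iff_ae.1 (hw ⟨n, rfl⟩), ae_all_iff.2 hy,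
      AEEqFun.coeFn_zero (μ := μ) (β := ℝ)] with ω hw hy h0
    rw [h0]
    by_cases hω : ω ∈ ⋃ n, A n
    · obtain ⟨n, hn⟩ := Set.mem_iUnion.1 hω
      simpa [hy n, Set.indicator_of_mem hω, Set.indicator_of_mem hn] using hw n
    · simpa [hy 0, Set.indicator_of_notMem hω,
        Set.indicator_of_notMem fun h => hω (Set.mem_iUnion_of_mem 0 h)] using hw 0
  simpa [y] using (tendsto_const_nhds (x := f (hT.restrict (.iUnion hA) u))).sub
    (hf.tendsto_of_antitone hanti hglb)

theorem restrict_iUnion_nonpos {f : E →ₗ[ℝ] ℝ} (hoc : OrderContinuousFun ⇑f) (hf : Monotone f)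
    {u : E} (hu : 0 ≤ u) {A : ℕ → Set Ω} (hA : ∀ n, MeasurableSet (A n))
    (hfA : ∀ n, f (hT.restrict (hA n) u) ≤ 0) : f (hT.restrict (.iUnion hA) u) ≤ 0 := by
  have hB : ∀ n, MeasurableSet (Set.accumulate A n) := fun n => by
    rw [Set.accumulate_def]; exact .iUnion fun i => .iUnion fun _ => hA i
  have hfB : ∀ n, f (hT.restrict (hB n) u) ≤ 0 := by
    intro n
    induction n with
    | zero => simpa [Set.accumulate_zero_nat] using hfA 0
    | succ n ih =>
      have hle := hT.restrict_le_restrict (hB (n + 1)) ((hB n).union (hA (n + 1)))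
        (Set.accumulate_succ A n).le.eventuallyLE hu
      have := hf (hle.trans (hT.restrict_union_le (hB n) (hA (n + 1)) hu))
      rw [map_add] at this
      linarith [hfA (n + 1)]
  exact (hf (hT.restrict_le_restrict _ (.iUnion hB) Set.iUnion_accumulate.ge.eventuallyLE hu)).trans
    (le_of_tendsto' (hT.tendsto_restrict_iUnion hoc hB Set.monotone_accumulate hu) hfB)

def Charges (f : E →ₗ[ℝ] ℝ) (u : E) (S : Set Ω) : Prop :=
  ∀ ⦃A : Set Ω⦄ (hA : MeasurableSet A), A ⊆ S → f (hT.restrict hA u) ≤ 0 → μ A = 0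

theorem exists_charges_pos [IsFiniteMeasure μ] {f : E →ₗ[ℝ] ℝ} (hoc : OrderContinuousFun ⇑f)
    (hf : Monotone f) {u : E} (hu : 0 ≤ u) (hfu : 0 < f u) :
    ∃ S, MeasurableSet S ∧ hT.Charges f u S ∧ 0 < μ S := by
  -- `S` is the complement of an essentially largest set `N` on which `u` is `f`-negligible
  obtain ⟨N, ⟨hN, hfN⟩, hmax⟩ := exists_ae_maximal_of_iUnion_mem μ
    (𝒮 := {A | ∃ hA : MeasurableSet A, f (hT.restrict hA u) ≤ 0})
    ⟨∅, .empty, (hf (hT.restrict_le_of_ae .empty le_rfl (by simp))).trans_eq (map_zero f)⟩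
    (fun _ hA => hA.1) fun A hA => by
      choose hA hfA using hA
      exact ⟨.iUnion hA, hT.restrict_iUnion_nonpos hoc hf hu hA hfA⟩
  refine ⟨Nᶜ, hN.compl, fun A hA hAN hfA => ?_, pos_iff_ne_zero.2 fun hNc => ?_⟩
  · exact measure_mono_null (show A ⊆ A \ N from fun ω hω => ⟨hω, hAN hω⟩)
      (ae_le_set.1 (hmax A ⟨hA, hfA⟩))
  · have := hf (hT.restrict_le_restrict .univ hN
      (ae_le_set.2 (by rwa [← Set.compl_eq_univ_sdiff])) hu)
    rw [hT.restrict_univ] at this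
    linarith

section Charges

variable {hT}

theorem Charges.of_le {f g : E →ₗ[ℝ] ℝ} {u v : E} {S : Set Ω} (h : hT.Charges f u S)
    (hg : Monotone g) (hu : 0 ≤ u) {a b : ℝ} (ha : 0 < a) (hb : 0 < b)
    (hfg : ∀ x, 0 ≤ x → a * f x ≤ g x) (huv : b • u ≤ v) : hT.Charges g v S := by
  intro A hA hAS hgA
  refine h hA hAS ?_
  have h₁ := hfg _ (hT.restrict_nonneg hA hu)
  have h₂ : b * g (hT.restrict hA u) ≤ g (hT.restrict hA v) := by
    simpa using hg (hT.restrict_monotone hA huv)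
  have h₃ : g (hT.restrict hA u) ≤ 0 := by nlinarith
  nlinarith

theorem Charges.iUnion {f : E →ₗ[ℝ] ℝ} {u : E} {S : ℕ → Set Ω} (hf : Monotone f) (hu : 0 ≤ u)
    (hS : ∀ n, MeasurableSet (S n)) (h : ∀ n, hT.Charges f u (S n)) :
    hT.Charges f u (⋃ n, S n) := by
  intro A hA hAS hfA
  refine measure_mono_null (fun ω hω => ?_) (measure_iUnion_null fun n =>
    h n (hA.inter (hS n)) Set.inter_subset_right ((hf ?_).trans hfA))
  · obtain ⟨n, hn⟩ := Set.mem_iUnion.1 (hAS hω)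
    exact Set.mem_iUnion.2 ⟨n, hω, hn⟩
  · exact hT.restrict_le_restrict _ hA Set.inter_subset_left.eventuallyLE hu

theorem Charges.ae_nonpos {f : E →ₗ[ℝ] ℝ} {u w : E} {S : Set Ω} (h : hT.Charges f u S)
    (hS : MeasurableSet S) (hf : Monotone f) (hw : 0 ≤ w) (hfw : f w ≤ 0) :
    ∀ᵐ ω ∂μ, ω ∈ S → T w ω ≤ 0 := by
  have := hT.posSMulMono
  -- on `A k` we have `u ≤ (k + 1) w`, so `f (u · 𝟙_{A k}) ≤ (k + 1) f w ≤ 0`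
  set A : ℕ → Set Ω := fun k => S ∩ {ω | T u ω ≤ T (((k : ℝ) + 1) • w) ω}
  have hA : ∀ k, MeasurableSet (A k) := fun k =>
    hS.inter (measurableSet_le (T u).measurable (T _).measurable)
  have hnull : ∀ k, μ (A k) = 0 := fun k => by
    refine h (hA k) Set.inter_subset_left ((hf (hT.restrict_le_of_ae (hA k)
      (smul_nonneg (by positivity) hw) (.of_forall fun ω hω => hω.2))).trans ?_)
    rw [map_smul, smul_eq_mul]
    exact mul_nonpos_of_nonneg_of_nonpos (by positivity) hfw
  filter_upwards [measure_eq_zero_iff_ae_notMem.1 (measure_iUnion_null hnull),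
    ae_all_iff.2 fun k : ℕ => AEEqFun.coeFn_linearMap_smul T ((k : ℝ) + 1) w] with ω hω hsmul hωS
  by_contra! hpos
  obtain ⟨k, hk⟩ := exists_nat_ge (T u ω / T w ω)
  refine hω (Set.mem_iUnion.2 ⟨k, hωS, ?_⟩)
  show T u ω ≤ T (((k : ℝ) + 1) • w) ω
  rw [hsmul k, Pi.smul_apply, smul_eq_mul]
  rw [div_le_iff₀ hpos] at hk
  nlinarith

theorem Charges.ae_pos {f : E →ₗ[ℝ] ℝ} {u : E} {S : Set Ω} (h : hT.Charges f u S)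
    (hS : MeasurableSet S) (hf : Monotone f) : ∀ᵐ ω ∂μ, ω ∈ S → 0 < T u ω := by
  have hA : MeasurableSet (S ∩ {ω | T u ω ≤ 0}) :=
    hS.inter (measurableSet_le (T u).measurable measurable_const)
  have hnull := h hA Set.inter_subset_left <| by
    refine (hf (hT.restrict_le_of_ae hA le_rfl ?_)).trans_eq (map_zero f)
    filter_upwards [show ⇑(T 0) =ᵐ[μ] 0 by rw [map_zero]; exact AEEqFun.coeFn_zero] with ω h0 hω
    rw [h0]
    exact hω.2
  filter_upwards [measure_eq_zero_iff_ae_notMem.1 hnull] with ω hω hωS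
  by_contra! hle
  exact hω ⟨hωS, hle⟩

end Charges

theorem exists_charges_iUnion {f : ℕ → E →ₗ[ℝ] ℝ} (hoc : ∀ n, OrderContinuousFun ⇑(f n))
    (hf : ∀ n, Monotone (f n)) {u : ℕ → E} (hu : ∀ n, 0 ≤ u n) {S : ℕ → Set Ω}
    (hS : ∀ n, MeasurableSet (S n)) (h : ∀ n, hT.Charges (f n) (u n) (S n)) :
    ∃ c : ℕ → ℝ, (∀ n, 0 < c n) ∧ ∃ φ : E →ₗ[ℝ] ℝ, OrderContinuousFun ⇑φ ∧ Monotone φ ∧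
      (∀ x, HasSum (fun n => c n * f n x) (φ x)) ∧ ∃ v, 0 ≤ v ∧ hT.Charges φ v (⋃ n, S n) := by
  have := hT.posSMulMono
  obtain ⟨c, hc, φ, hφoc, hφ, hφsum⟩ := exists_hasSum_orderContinuous f hoc hf
  obtain ⟨d, hd, hdu⟩ := exists_pos_summable_smul u
  have hdu_nonneg : ∀ n, 0 ≤ d n • u n := fun n => smul_nonneg (hd n).le (hu n)
  refine ⟨c, hc, φ, hφoc, hφ, hφsum, _, tsum_nonneg hdu_nonneg,
    Charges.iUnion hφ (tsum_nonneg hdu_nonneg) hS fun n => (h n).of_le hφ (hu n) (hc n) (hd n)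
      (fun x hx => ?_) (hdu.le_tsum n fun j _ => hdu_nonneg j)⟩
  exact le_hasSum (hφsum x) n fun j _ => mul_nonneg (hc j).le (by simpa using hf j hx)

end IsBFSvia

/-- Kreps–Yan for `σ(X, Xₙ~)`: in a Banach function space `E`, for every
`σ(E, Eₙ~)`-closed convex cone `C` with `-E₊ ⊆ C` and `C ∩ E₊ = {0}`, there is a strictly
positive order continuous functional `φ` with `φ ≤ 0` on `C`. -/
theorem kreps_yan_orderContinuous
    {m0 : MeasurableSpace Ω} {μ : Measure Ω} [IsProbabilityMeasure μ]
    (E : Type v) [NormedAddCommGroup E] [Lattice E] [HasSolidNorm E] [IsOrderedAddMonoid E] [NormedSpace ℝ E] [CompleteSpace E]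
    (T : E →ₗ[ℝ] (Ω →ₘ[μ] ℝ)) (hT : IsBFSvia μ E T)
    (C : Set E)
    (hclosed : @IsClosed E (weakOCTop E) C)
    (hsmul : ∀ x ∈ C, ∀ r : ℝ, 0 ≤ r → r • x ∈ C)
    (hadd : ∀ x ∈ C, ∀ y ∈ C, x + y ∈ C)
    (hneg : ∀ x : E, 0 ≤ x → -x ∈ C)
    (hint : ∀ x ∈ C, 0 ≤ x → x = 0) :
    ∃ φ : E →ₗ[ℝ] ℝ, OrderContinuousFun ⇑φ ∧ (∀ x : E, 0 < x → 0 < φ x) ∧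
      ∀ x ∈ C, φ x ≤ 0 := by
  let K := {f : E →ₗ[ℝ] ℝ | OrderContinuousFun ⇑f ∧ Monotone f ∧ ∀ z ∈ C, f z ≤ 0}
  obtain ⟨S₀, ⟨hS₀, φ, ⟨hφoc, hφ, hφC⟩, u, hu, hφS₀⟩, hmax⟩ := exists_ae_maximal_of_iUnion_mem μ
    (𝒮 := {S | MeasurableSet S ∧ ∃ f ∈ K, ∃ u, 0 ≤ u ∧ hT.Charges f u S})
    ⟨∅, .empty, 0, ⟨(orderContinuousDual E).zero_mem, fun _ _ _ => le_rfl, fun _ _ => le_rfl⟩,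
      0, le_rfl, fun A _ hA _ => measure_mono_null hA measure_empty⟩
    (fun _ hS => hS.1) fun S hS => by
      choose hS f hf u hu hch using hS
      obtain ⟨c, hc, φ, hoc, hφ, hφsum, v, hv, hch⟩ :=
        hT.exists_charges_iUnion (fun n => (hf n).1) (fun n => (hf n).2.1) hu hS hch
      exact ⟨.iUnion hS, φ, ⟨hoc, hφ, fun z hz => (hφsum z).nonpos fun n =>
        mul_nonpos_of_nonneg_of_nonpos (hc n).le ((hf n).2.2 z hz)⟩, v, hv, hch⟩
  refine ⟨φ, hφoc, fun x hx => ?_, hφC⟩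
  by_contra! hφx
  obtain ⟨h, hoc, hh, hhC, hhx⟩ :=
    exists_orderContinuous_monotone_separating hclosed hsmul hadd hneg hint hx
  obtain ⟨S, hS, hhS, hμS⟩ := hT.exists_charges_pos hoc hh hx.le hhx
  -- `T x ≤ 0` a.e. on `S₀`, but `T x > 0` a.e. on `S`, and `S ≤ᵐ S₀`
  refine hμS.ne' (measure_eq_zero_iff_ae_notMem.2 ?_)
  filter_upwards [hmax S ⟨hS, h, ⟨hoc, hh, hhC⟩, x, hx.le, hhS⟩,
    hφS₀.ae_nonpos hS₀ hφ hx.le hφx, hhS.ae_pos hS hh] with ω hSS₀ hnonpos hpos hωS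
  exact (hpos hωS).not_ge (hnonpos (hSS₀ hωS))
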